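/- Let W₀ and W₁ be finite-dimensional real inner product spaces given direct-sum decompositions W₀ = V₀ ⊕ H₀ and W₁ = V₁ ⊕ H₁ into nontrivial subspaces, and set θ₀ = ∠(V₀,H₀), θ₁ = ∠(V₁,H₁). For a linear map T : W₀ → W₁ define the blocks T^{++} = π_{V₁} ∘ T|_{V₀}, T^{+−} = π_{V₁} ∘ T|_{H₀}, T^{−+} = π_{H₁} ∘ T|_{V₀}, T^{−−} = π_{H₁} ∘ T|_{H₀}, where π_{V₁} and π_{H₁} are the projections associated with the decomposition W₁ = V₁ ⊕ H₁, and set ‖T‖_max equal to the maximum of the operator norms of these four blocks. Then (1) ‖T‖ ≤ 4 · (sin θ₀)⁻¹ · ‖T‖_max, and (2) ‖T‖_max ≤ (sin θ₁)⁻¹ · ‖T‖. -/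

import Mathlib

open InnerProductGeometry

/-- Angle between two nontrivial subspaces: infimum of angles between nonzero vectors. -/
noncomputable def angleSS {V : Type*} [NormedAddCommGroup V] [InnerProductSpace ℝ V]
    (E F : Submodule ℝ V) : ℝ :=
  sInf {θ : ℝ | ∃ u ∈ E, ∃ v ∈ F, u ≠ 0 ∧ v ≠ 0 ∧ θ = angle u v}

/-- The operator norm of a linear map between finite-dimensional normed spaces. -/
noncomputable def opN {E F : Type*} [NormedAddCommGroup E] [NormedSpace ℝ E]
    [FiniteDimensional ℝ E] [NormedAddCommGroup F] [NormedSpace ℝ F]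
    (T : E →ₗ[ℝ] F) : ℝ :=
  ‖LinearMap.toContinuousLinearMap T‖

section AuxAngle

variable {W : Type*} [NormedAddCommGroup W] [InnerProductSpace ℝ W]

lemma angleSS_bddBelow (E F : Submodule ℝ W) :
    BddBelow {θ : ℝ | ∃ u ∈ E, ∃ v ∈ F, u ≠ 0 ∧ v ≠ 0 ∧ θ = angle u v} := by
  refine ⟨0, fun θ hθ => ?_⟩
  obtain ⟨u, -, v, -, -, -, rfl⟩ := hθ
  exact angle_nonneg u v

lemma angleSS_le {E F : Submodule ℝ W} {u v : W} (hu : u ∈ E) (hv : v ∈ F)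
    (hu0 : u ≠ 0) (hv0 : v ≠ 0) : angleSS E F ≤ angle u v :=
  csInf_le (angleSS_bddBelow E F) ⟨u, hu, v, hv, hu0, hv0, rfl⟩

lemma angleSS_nonneg {E F : Submodule ℝ W} (hE : E ≠ ⊥) (hF : F ≠ ⊥) :
    0 ≤ angleSS E F := by
  obtain ⟨u, hu, hu0⟩ := Submodule.exists_mem_ne_zero_of_ne_bot hE
  obtain ⟨v, hv, hv0⟩ := Submodule.exists_mem_ne_zero_of_ne_bot hF
  refine le_csInf ⟨angle u v, u, hu, v, hv, hu0, hv0, rfl⟩ fun θ hθ => ?_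
  obtain ⟨u, -, v, -, -, -, rfl⟩ := hθ
  exact angle_nonneg u v

lemma angleSS_le_pi_div_two {E F : Submodule ℝ W} (hE : E ≠ ⊥) (hF : F ≠ ⊥) :
    angleSS E F ≤ Real.pi / 2 := by
  obtain ⟨u, hu, hu0⟩ := Submodule.exists_mem_ne_zero_of_ne_bot hE
  obtain ⟨v, hv, hv0⟩ := Submodule.exists_mem_ne_zero_of_ne_bot hF
  rcases le_or_gt (angle u v) (Real.pi / 2) with h | h
  · exact (angleSS_le hu hv hu0 hv0).trans h
  · have h2 : angle u (-v) = Real.pi - angle u v := angle_neg_right u v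
    have := angleSS_le hu (F.neg_mem hv) hu0 (neg_ne_zero.mpr hv0)
    rw [h2] at this
    linarith

lemma angleSS_comm (E F : Submodule ℝ W) : angleSS E F = angleSS F E := by
  unfold angleSS
  congr 1
  ext θ
  constructor
  · rintro ⟨u, hu, v, hv, hu0, hv0, rfl⟩
    exact ⟨v, hv, u, hu, hv0, hu0, angle_comm u v⟩
  · rintro ⟨u, hu, v, hv, hu0, hv0, rfl⟩
    exact ⟨v, hv, u, hu, hv0, hu0, angle_comm u v⟩

/-- Key inequality: for `u ∈ E`, `v ∈ F`, `‖u‖ sin θ ≤ ‖u + v‖`. -/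
lemma key_ineq {E F : Submodule ℝ W} (hE : E ≠ ⊥) (hF : F ≠ ⊥)
    {u v : W} (hu : u ∈ E) (hv : v ∈ F) :
    ‖u‖ * Real.sin (angleSS E F) ≤ ‖u + v‖ := by
  set θ := angleSS E F with hθ
  have hθ0 : 0 ≤ θ := angleSS_nonneg hE hF
  have hθpi : θ ≤ Real.pi := (angleSS_le_pi_div_two hE hF).trans
    (by linarith [Real.pi_pos])
  have hsin0 : 0 ≤ Real.sin θ := Real.sin_nonneg_of_nonneg_of_le_pi hθ0 hθpi
  have hsin1 : Real.sin θ ≤ 1 := Real.sin_le_one θ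
  rcases eq_or_ne u 0 with rfl | hu0
  · simpa using mul_nonneg (norm_nonneg _) hsin0
  rcases eq_or_ne v 0 with rfl | hv0
  · simpa using mul_le_of_le_one_right (norm_nonneg u) hsin1
  -- nonzero case
  have hang1 : θ ≤ angle u v := angleSS_le hu hv hu0 hv0
  have hang2 : θ ≤ angle u (-v) := angleSS_le hu (F.neg_mem hv) hu0 (neg_ne_zero.mpr hv0)
  have hcos1 : Real.cos (angle u v) ≤ Real.cos θ :=
    Real.cos_le_cos_of_nonneg_of_le_pi hθ0 (angle_le_pi u v) hang1
  have hcos2 : Real.cos (angle u (-v)) ≤ Real.cos θ :=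
    Real.cos_le_cos_of_nonneg_of_le_pi hθ0 (angle_le_pi u (-v)) hang2
  have hnu : (0:ℝ) < ‖u‖ := norm_pos_iff.mpr hu0
  have hnv : (0:ℝ) < ‖v‖ := norm_pos_iff.mpr hv0
  have hip1 : (inner ℝ u v : ℝ) = Real.cos (angle u v) * (‖u‖ * ‖v‖) := by
    rw [cos_angle]; field_simp
  have hip2 : (inner ℝ u (-v) : ℝ) = Real.cos (angle u (-v)) * (‖u‖ * ‖v‖) := by
    rw [cos_angle]; rw [norm_neg]; field_simp
  have hip2'' : -(inner ℝ u v : ℝ) = Real.cos (angle u (-v)) * (‖u‖ * ‖v‖) := by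
    rw [← inner_neg_right]; exact hip2
  have hlow : -(‖u‖ * ‖v‖ * Real.cos θ) ≤ (inner ℝ u v : ℝ) := by
    nlinarith [mul_pos hnu hnv]
  have hexp : ‖u + v‖ ^ 2 = ‖u‖ ^ 2 + 2 * (inner ℝ u v : ℝ) + ‖v‖ ^ 2 :=
    norm_add_sq_real u v
  have hpyth : Real.sin θ ^ 2 + Real.cos θ ^ 2 = 1 := Real.sin_sq_add_cos_sq θ
  nlinarith [norm_nonneg (u + v), sq_nonneg (‖v‖ - ‖u‖ * Real.cos θ),
    sq_nonneg (‖u + v‖ - ‖u‖ * Real.sin θ), sq_nonneg (‖u + v‖ + ‖u‖ * Real.sin θ),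
    mul_nonneg (mul_nonneg hnu.le hsin0) (norm_nonneg (u + v))]

set_option maxHeartbeats 1600000 in
/-- Positivity of the sine of the angle between complementary nontrivial subspaces. -/
lemma sin_angleSS_pos [FiniteDimensional ℝ W] {E F : Submodule ℝ W}
    (hc : IsCompl E F) (hE : E ≠ ⊥) (hF : F ≠ ⊥) :
    0 < Real.sin (angleSS E F) := by
  have hθpi2 : angleSS E F ≤ Real.pi / 2 := angleSS_le_pi_div_two hE hF
  refine Real.sin_pos_of_pos_of_lt_pi ?_ (by linarith [Real.pi_pos])
  -- the projection onto E along F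
  set P := LinearMap.toContinuousLinearMap (E.linearProjOfIsCompl F hc) with hP
  have hPapp : ∀ w, P w = E.linearProjOfIsCompl F hc w := fun w =>
    congrFun (LinearMap.coe_toContinuousLinearMap' (E.linearProjOfIsCompl F hc)) w
  set C := ‖P‖ with hC
  obtain ⟨e, he, he0⟩ := Submodule.exists_mem_ne_zero_of_ne_bot hE
  have hne : (0:ℝ) < ‖e‖ := norm_pos_iff.mpr he0
  have hPe : P e = ⟨e, he⟩ := by
    rw [hPapp]
    exact Submodule.linearProjOfIsCompl_apply_left hc ⟨e, he⟩
  have hC1 : 1 ≤ C := by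
    have := P.le_opNorm e
    rw [hPe] at this
    rw [Submodule.coe_norm] at this
    simp only at this
    nlinarith
  have hCpos : (0:ℝ) < C := by linarith
  set α := Real.arccos (1 - 1 / (2 * C ^ 2)) with hα
  have harg1 : -1 ≤ 1 - 1 / (2 * C ^ 2) := by
    have : 1 / (2 * C ^ 2) ≤ 1 / 2 := by
      apply div_le_div_of_nonneg_left <;> nlinarith
    linarith
  have harg2 : 1 - 1 / (2 * C ^ 2) ≤ 1 := by
    have : 0 < 1 / (2 * C ^ 2) := by positivity
    linarith
  have hαpos : 0 < α := Real.arccos_pos.mpr (by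
    have : 0 < 1 / (2 * C ^ 2) := by positivity
    linarith)
  -- lower bound the infimum by α
  obtain ⟨u₀, hu₀, hu00⟩ := Submodule.exists_mem_ne_zero_of_ne_bot hE
  obtain ⟨v₀, hv₀, hv00⟩ := Submodule.exists_mem_ne_zero_of_ne_bot hF
  have hlb : α ≤ angleSS E F := by
    refine le_csInf ⟨angle u₀ v₀, u₀, hu₀, v₀, hv₀, hu00, hv00, rfl⟩ fun θ hθ => ?_
    obtain ⟨u, hu, v, hv, hu0, hv0, rfl⟩ := hθ
    set u' := (‖u‖:ℝ)⁻¹ • u with hu'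
    set v' := (‖v‖:ℝ)⁻¹ • v with hv'
    have hnu : (0:ℝ) < ‖u‖ := norm_pos_iff.mpr hu0
    have hnv : (0:ℝ) < ‖v‖ := norm_pos_iff.mpr hv0
    have hnu' : ‖u'‖ = 1 := by
      rw [hu', norm_smul]; simp [abs_of_pos (inv_pos.mpr hnu)]
      field_simp
    have hnv' : ‖v'‖ = 1 := by
      rw [hv', norm_smul]; simp [abs_of_pos (inv_pos.mpr hnv)]
      field_simp
    have hangeq : angle u' v' = angle u v := by
      rw [hu', hv', angle_smul_left_of_pos _ _ (inv_pos.mpr hnu),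
        angle_smul_right_of_pos _ _ (inv_pos.mpr hnv)]
    have hu'E : u' ∈ E := E.smul_mem _ hu
    have hv'F : v' ∈ F := F.smul_mem _ hv
    -- ‖u' - v'‖ ≥ 1/C
    have hPuv : P (u' - v') = ⟨u', hu'E⟩ := by
      rw [hPapp, map_sub]
      have e1 : E.linearProjOfIsCompl F hc u' = ⟨u', hu'E⟩ :=
        Submodule.linearProjOfIsCompl_apply_left hc ⟨u', hu'E⟩
      have e2 : E.linearProjOfIsCompl F hc v' = 0 :=
        Submodule.linearProjOfIsCompl_apply_right hc ⟨v', hv'F⟩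
      rw [e1, e2, sub_zero]
    have h1C : 1 ≤ C * ‖u' - v'‖ := by
      have := P.le_opNorm (u' - v')
      rw [hPuv, Submodule.coe_norm] at this
      simp only at this
      rw [hnu'] at this
      exact this
    -- cos bound
    have hipcos : Real.cos (angle u' v') = (inner ℝ u' v' : ℝ) := by
      rw [cos_angle, hnu', hnv']; ring_nf
    have hsubsq : ‖u' - v'‖ ^ 2 = 2 - 2 * (inner ℝ u' v' : ℝ) := by
      have := norm_sub_sq_real u' v'
      rw [hnu', hnv'] at this
      linarith
    have hcosb : Real.cos (angle u v) ≤ 1 - 1 / (2 * C ^ 2) := by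
      rw [← hangeq, hipcos]
      have hn : (0:ℝ) ≤ ‖u' - v'‖ := norm_nonneg _
      have h1C' : (0:ℝ) ≤ 1 / C := by positivity
      have h2 : (1:ℝ) / C ≤ ‖u' - v'‖ := by
        rw [div_le_iff₀ hCpos]
        nlinarith
      have h3 : (1:ℝ) / C ^ 2 ≤ ‖u' - v'‖ ^ 2 := by
        have := pow_le_pow_left₀ h1C' h2 2
        rwa [div_pow, one_pow] at this
      have h4 : 1 / C ^ 2 ≤ 2 - 2 * (inner ℝ u' v' : ℝ) := hsubsq ▸ h3
      have hC2 : (0:ℝ) < C ^ 2 := by positivity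
      rw [div_le_iff₀ hC2] at h4
      rw [le_sub_comm, div_le_iff₀ (by positivity : (0:ℝ) < 2 * C ^ 2)]
      nlinarith
    by_contra hcon
    push_neg at hcon
    have hcα : Real.cos α < Real.cos (angle u v) :=
      Real.cos_lt_cos_of_nonneg_of_le_pi (angle_nonneg u v) (Real.arccos_le_pi _) hcon
    rw [Real.cos_arccos harg1 harg2] at hcα
    linarith
  linarith

/-- Norm bound on the projection in terms of the angle. -/
lemma proj_norm_le [FiniteDimensional ℝ W] {E F : Submodule ℝ W}
    (hc : IsCompl E F) (hE : E ≠ ⊥) (hF : F ≠ ⊥) (x : W) :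
    ‖(E.linearProjOfIsCompl F hc x : W)‖ * Real.sin (angleSS E F) ≤ ‖x‖ := by
  have hx : (E.linearProjOfIsCompl F hc x : W) + (F.linearProjOfIsCompl E hc.symm x : W) = x :=
    Submodule.projection_add_projection_eq_self hc x
  calc ‖(E.linearProjOfIsCompl F hc x : W)‖ * Real.sin (angleSS E F)
      ≤ ‖(E.linearProjOfIsCompl F hc x : W) + (F.linearProjOfIsCompl E hc.symm x : W)‖ :=
        key_ineq hE hF (E.linearProjOfIsCompl F hc x).2 (F.linearProjOfIsCompl E hc.symm x).2
    _ = ‖x‖ := by rw [hx]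

end AuxAngle

section OpNAux

variable {E F : Type*} [NormedAddCommGroup E] [NormedSpace ℝ E]
    [FiniteDimensional ℝ E] [NormedAddCommGroup F] [NormedSpace ℝ F]

lemma opN_le_apply (S : E →ₗ[ℝ] F) (x : E) : ‖S x‖ ≤ opN S * ‖x‖ := by
  have h := (LinearMap.toContinuousLinearMap S).le_opNorm x
  rwa [congrFun (LinearMap.coe_toContinuousLinearMap' S) x] at h

lemma opN_le_bound (S : E →ₗ[ℝ] F) {M : ℝ} (hM : 0 ≤ M)
    (h : ∀ x, ‖S x‖ ≤ M * ‖x‖) : opN S ≤ M :=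
  ContinuousLinearMap.opNorm_le_bound _ hM fun x => by
    rw [congrFun (LinearMap.coe_toContinuousLinearMap' S) x]; exact h x

lemma opN_nonneg (S : E →ₗ[ℝ] F) : 0 ≤ opN S := norm_nonneg _

end OpNAux

set_option maxHeartbeats 1600000 in
theorem stmt7 {W₀ W₁ : Type*}
    [NormedAddCommGroup W₀] [InnerProductSpace ℝ W₀] [FiniteDimensional ℝ W₀]
    [NormedAddCommGroup W₁] [InnerProductSpace ℝ W₁] [FiniteDimensional ℝ W₁]
    (V₀ H₀ : Submodule ℝ W₀) (V₁ H₁ : Submodule ℝ W₁)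
    (hc₀ : IsCompl V₀ H₀) (hc₁ : IsCompl V₁ H₁)
    (hV₀ : V₀ ≠ ⊥) (hH₀ : H₀ ≠ ⊥) (hV₁ : V₁ ≠ ⊥) (hH₁ : H₁ ≠ ⊥)
    (θ₀ θ₁ : ℝ) (hθ₀ : θ₀ = angleSS V₀ H₀) (hθ₁ : θ₁ = angleSS V₁ H₁)
    (T : W₀ →L[ℝ] W₁)
    (Tpp : V₀ →ₗ[ℝ] V₁) (Tpm : H₀ →ₗ[ℝ] V₁)
    (Tmp : V₀ →ₗ[ℝ] H₁) (Tmm : H₀ →ₗ[ℝ] H₁)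
    (hTpp : Tpp = (V₁.linearProjOfIsCompl H₁ hc₁).comp
      ((T : W₀ →ₗ[ℝ] W₁).comp V₀.subtype))
    (hTpm : Tpm = (V₁.linearProjOfIsCompl H₁ hc₁).comp
      ((T : W₀ →ₗ[ℝ] W₁).comp H₀.subtype))
    (hTmp : Tmp = (H₁.linearProjOfIsCompl V₁ hc₁.symm).comp
      ((T : W₀ →ₗ[ℝ] W₁).comp V₀.subtype))
    (hTmm : Tmm = (H₁.linearProjOfIsCompl V₁ hc₁.symm).comp
      ((T : W₀ →ₗ[ℝ] W₁).comp H₀.subtype))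
    (Tmax : ℝ)
    (hTmax : Tmax = max (max (opN Tpp) (opN Tpm)) (max (opN Tmp) (opN Tmm))) :
    ‖T‖ ≤ 4 * (Real.sin θ₀)⁻¹ * Tmax ∧ Tmax ≤ (Real.sin θ₁)⁻¹ * ‖T‖ := by
  have hs0 : 0 < Real.sin θ₀ := hθ₀ ▸ sin_angleSS_pos hc₀ hV₀ hH₀
  have hs1 : 0 < Real.sin θ₁ := hθ₁ ▸ sin_angleSS_pos hc₁ hV₁ hH₁
  have hTmax0 : 0 ≤ Tmax := by
    rw [hTmax]
    exact le_max_of_le_left (le_max_of_le_left (opN_nonneg Tpp))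
  -- projection bounds in W₁
  have pb1 : ∀ y : W₁, ‖(V₁.linearProjOfIsCompl H₁ hc₁ y : W₁)‖ ≤ (Real.sin θ₁)⁻¹ * ‖y‖ := by
    intro y
    have h := proj_norm_le hc₁ hV₁ hH₁ y
    rw [← hθ₁] at h
    rw [inv_mul_eq_div, le_div_iff₀ hs1]
    exact h
  have pb2 : ∀ y : W₁, ‖(H₁.linearProjOfIsCompl V₁ hc₁.symm y : W₁)‖ ≤ (Real.sin θ₁)⁻¹ * ‖y‖ := by
    intro y
    have h := proj_norm_le hc₁.symm hH₁ hV₁ y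
    rw [angleSS_comm, ← hθ₁] at h
    rw [inv_mul_eq_div, le_div_iff₀ hs1]
    exact h
  -- projection bounds in W₀
  have pa1 : ∀ w : W₀, ‖(V₀.linearProjOfIsCompl H₀ hc₀ w : W₀)‖ ≤ (Real.sin θ₀)⁻¹ * ‖w‖ := by
    intro w
    have h := proj_norm_le hc₀ hV₀ hH₀ w
    rw [← hθ₀] at h
    rw [inv_mul_eq_div, le_div_iff₀ hs0]
    exact h
  have pa2 : ∀ w : W₀, ‖(H₀.linearProjOfIsCompl V₀ hc₀.symm w : W₀)‖ ≤ (Real.sin θ₀)⁻¹ * ‖w‖ := by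
    intro w
    have h := proj_norm_le hc₀.symm hH₀ hV₀ w
    rw [angleSS_comm, ← hθ₀] at h
    rw [inv_mul_eq_div, le_div_iff₀ hs0]
    exact h
  constructor
  · -- part 1
    apply ContinuousLinearMap.opNorm_le_bound T (by positivity)
    intro w
    set vA := V₀.linearProjOfIsCompl H₀ hc₀ w with hvA
    set hA := H₀.linearProjOfIsCompl V₀ hc₀.symm w with hhA
    have hw : (↑vA : W₀) + ↑hA = w :=
      Submodule.projection_add_projection_eq_self hc₀ w
    have hTv : T ↑vA = ↑(Tpp vA) + ↑(Tmp vA) := by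
      rw [hTpp, hTmp]
      simp only [LinearMap.comp_apply, Submodule.subtype_apply,
        ContinuousLinearMap.coe_coe]
      exact (Submodule.projection_add_projection_eq_self hc₁ (T ↑vA)).symm
    have hTh : T ↑hA = ↑(Tpm hA) + ↑(Tmm hA) := by
      rw [hTpm, hTmm]
      simp only [LinearMap.comp_apply, Submodule.subtype_apply,
        ContinuousLinearMap.coe_coe]
      exact (Submodule.projection_add_projection_eq_self hc₁ (T ↑hA)).symm
    have hTw : T w = ↑(Tpp vA) + ↑(Tmp vA) + (↑(Tpm hA) + ↑(Tmm hA)) := by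
      rw [← hw, map_add, hTv, hTh]
    have hvb : ‖vA‖ ≤ (Real.sin θ₀)⁻¹ * ‖w‖ := by
      rw [Submodule.coe_norm]; exact pa1 w
    have hhb : ‖hA‖ ≤ (Real.sin θ₀)⁻¹ * ‖w‖ := by
      rw [Submodule.coe_norm]; exact pa2 w
    have b1 : ‖((Tpp vA : V₁) : W₁)‖ ≤ Tmax * ((Real.sin θ₀)⁻¹ * ‖w‖) := by
      rw [← Submodule.coe_norm]
      calc ‖Tpp vA‖ ≤ opN Tpp * ‖vA‖ := opN_le_apply _ _
        _ ≤ Tmax * ‖vA‖ := by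
            apply mul_le_mul_of_nonneg_right _ (norm_nonneg _)
            rw [hTmax]; exact le_max_of_le_left (le_max_left _ _)
        _ ≤ Tmax * ((Real.sin θ₀)⁻¹ * ‖w‖) := mul_le_mul_of_nonneg_left hvb hTmax0
    have b2 : ‖((Tmp vA : H₁) : W₁)‖ ≤ Tmax * ((Real.sin θ₀)⁻¹ * ‖w‖) := by
      rw [← Submodule.coe_norm]
      calc ‖Tmp vA‖ ≤ opN Tmp * ‖vA‖ := opN_le_apply _ _
        _ ≤ Tmax * ‖vA‖ := by
            apply mul_le_mul_of_nonneg_right _ (norm_nonneg _)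
            rw [hTmax]; exact le_max_of_le_right (le_max_left _ _)
        _ ≤ Tmax * ((Real.sin θ₀)⁻¹ * ‖w‖) := mul_le_mul_of_nonneg_left hvb hTmax0
    have b3 : ‖((Tpm hA : V₁) : W₁)‖ ≤ Tmax * ((Real.sin θ₀)⁻¹ * ‖w‖) := by
      rw [← Submodule.coe_norm]
      calc ‖Tpm hA‖ ≤ opN Tpm * ‖hA‖ := opN_le_apply _ _
        _ ≤ Tmax * ‖hA‖ := by
            apply mul_le_mul_of_nonneg_right _ (norm_nonneg _)
            rw [hTmax]; exact le_max_of_le_left (le_max_right _ _)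
        _ ≤ Tmax * ((Real.sin θ₀)⁻¹ * ‖w‖) := mul_le_mul_of_nonneg_left hhb hTmax0
    have b4 : ‖((Tmm hA : H₁) : W₁)‖ ≤ Tmax * ((Real.sin θ₀)⁻¹ * ‖w‖) := by
      rw [← Submodule.coe_norm]
      calc ‖Tmm hA‖ ≤ opN Tmm * ‖hA‖ := opN_le_apply _ _
        _ ≤ Tmax * ‖hA‖ := by
            apply mul_le_mul_of_nonneg_right _ (norm_nonneg _)
            rw [hTmax]; exact le_max_of_le_right (le_max_right _ _)
        _ ≤ Tmax * ((Real.sin θ₀)⁻¹ * ‖w‖) := mul_le_mul_of_nonneg_left hhb hTmax0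
    have hsum : ‖T w‖ ≤ ‖((Tpp vA : V₁) : W₁)‖ + ‖((Tmp vA : H₁) : W₁)‖ +
        (‖((Tpm hA : V₁) : W₁)‖ + ‖((Tmm hA : H₁) : W₁)‖) := by
      rw [hTw]
      exact (norm_add_le _ _).trans (by gcongr <;> exact norm_add_le _ _)
    linarith [hsum, b1, b2, b3, b4]
  · -- part 2
    have hM : 0 ≤ (Real.sin θ₁)⁻¹ * ‖T‖ := by positivity
    rw [hTmax]
    have g1 : opN Tpp ≤ (Real.sin θ₁)⁻¹ * ‖T‖ := by
      apply opN_le_bound _ hM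
      intro x
      rw [hTpp]
      simp only [LinearMap.comp_apply, Submodule.subtype_apply,
        ContinuousLinearMap.coe_coe]
      rw [Submodule.coe_norm]
      calc ‖(V₁.linearProjOfIsCompl H₁ hc₁ (T ↑x) : W₁)‖
          ≤ (Real.sin θ₁)⁻¹ * ‖T ↑x‖ := pb1 _
        _ ≤ (Real.sin θ₁)⁻¹ * (‖T‖ * ‖(x : W₀)‖) :=
            mul_le_mul_of_nonneg_left (T.le_opNorm _) (by positivity)
        _ = (Real.sin θ₁)⁻¹ * ‖T‖ * ‖x‖ := by rw [Submodule.coe_norm]; ring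
    have g2 : opN Tpm ≤ (Real.sin θ₁)⁻¹ * ‖T‖ := by
      apply opN_le_bound _ hM
      intro x
      rw [hTpm]
      simp only [LinearMap.comp_apply, Submodule.subtype_apply,
        ContinuousLinearMap.coe_coe]
      rw [Submodule.coe_norm]
      calc ‖(V₁.linearProjOfIsCompl H₁ hc₁ (T ↑x) : W₁)‖
          ≤ (Real.sin θ₁)⁻¹ * ‖T ↑x‖ := pb1 _
        _ ≤ (Real.sin θ₁)⁻¹ * (‖T‖ * ‖(x : W₀)‖) :=
            mul_le_mul_of_nonneg_left (T.le_opNorm _) (by positivity)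
        _ = (Real.sin θ₁)⁻¹ * ‖T‖ * ‖x‖ := by rw [Submodule.coe_norm]; ring
    have g3 : opN Tmp ≤ (Real.sin θ₁)⁻¹ * ‖T‖ := by
      apply opN_le_bound _ hM
      intro x
      rw [hTmp]
      simp only [LinearMap.comp_apply, Submodule.subtype_apply,
        ContinuousLinearMap.coe_coe]
      rw [Submodule.coe_norm]
      calc ‖(H₁.linearProjOfIsCompl V₁ hc₁.symm (T ↑x) : W₁)‖
          ≤ (Real.sin θ₁)⁻¹ * ‖T ↑x‖ := pb2 _
        _ ≤ (Real.sin θ₁)⁻¹ * (‖T‖ * ‖(x : W₀)‖) :=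
            mul_le_mul_of_nonneg_left (T.le_opNorm _) (by positivity)
        _ = (Real.sin θ₁)⁻¹ * ‖T‖ * ‖x‖ := by rw [Submodule.coe_norm]; ring
    have g4 : opN Tmm ≤ (Real.sin θ₁)⁻¹ * ‖T‖ := by
      apply opN_le_bound _ hM
      intro x
      rw [hTmm]
      simp only [LinearMap.comp_apply, Submodule.subtype_apply,
        ContinuousLinearMap.coe_coe]
      rw [Submodule.coe_norm]
      calc ‖(H₁.linearProjOfIsCompl V₁ hc₁.symm (T ↑x) : W₁)‖
          ≤ (Real.sin θ₁)⁻¹ * ‖T ↑x‖ := pb2 _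
        _ ≤ (Real.sin θ₁)⁻¹ * (‖T‖ * ‖(x : W₀)‖) :=
            mul_le_mul_of_nonneg_left (T.le_opNorm _) (by positivity)
        _ = (Real.sin θ₁)⁻¹ * ‖T‖ * ‖x‖ := by rw [Submodule.coe_norm]; ring
    exact max_le (max_le g1 g2) (max_le g3 g4)
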